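/- arXiv:2406.19873 — 2 statements merged into one kernel-verified Lean document; each statement's English description precedes it below -/
import Mathlib

section
/- The addition table of Z_{2m} has no full transversal: there do not exist bijections f, g : Z_{2m} → Z_{2m} such that the map x ↦ f(x) + g(x) is also a bijection of Z_{2m}. -/
theorem no_full_transversal_zmod_even (m : ℕ) (hm : 1 ≤ m) :
    ¬ ∃ (f g : Equiv.Perm (ZMod (2 * m))),
      Function.Bijective (fun x => f x + g x) := by
  rintro ⟨f, g, hb⟩
  haveI : NeZero (2 * m) := ⟨by omega⟩
  set S : ZMod (2 * m) := ∑ x : ZMod (2 * m), x with hS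
  have hf : ∑ x : ZMod (2 * m), f x = S :=
    Fintype.sum_bijective f f.bijective _ id (fun x => rfl)
  have hg : ∑ x : ZMod (2 * m), g x = S :=
    Fintype.sum_bijective g g.bijective _ id (fun x => rfl)
  have hfg : ∑ x : ZMod (2 * m), (f x + g x) = S :=
    Fintype.sum_bijective _ hb _ id (fun x => rfl)
  rw [Finset.sum_add_distrib, hf, hg] at hfg
  have hS0 : S = 0 := by
    have h : S + S = 0 + S := by rw [zero_add]; exact hfg
    exact add_right_cancel h
  -- compute S explicitly
  have hbij : Function.Bijective (fun i : Fin (2 * m) => ((i : ℕ) : ZMod (2 * m))) := by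
    rw [Fintype.bijective_iff_injective_and_card]
    constructor
    · intro i j hij
      simp only at hij
      have hi := ZMod.val_cast_of_lt i.isLt
      have hj := ZMod.val_cast_of_lt j.isLt
      apply Fin.ext
      rw [← hi, ← hj, hij]
    · simp [ZMod.card]
  have key := Fintype.sum_bijective _ hbij
    (fun i : Fin (2 * m) => ((i : ℕ) : ZMod (2 * m))) id (fun x => rfl)
  simp only [id] at key
  have hSval : S = ((∑ i ∈ Finset.range (2 * m), i : ℕ) : ZMod (2 * m)) := by
    rw [hS, ← key, Nat.cast_sum,
      ← Fin.sum_univ_eq_sum_range (fun i => ((i : ℕ) : ZMod (2 * m)))]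
  rw [Finset.sum_range_id] at hSval
  have h1 : 2 * m * (2 * m - 1) / 2 = m * (2 * m - 1) := by
    have h2 : 2 * m * (2 * m - 1) = 2 * (m * (2 * m - 1)) := by ring
    rw [h2, Nat.mul_div_cancel_left _ (by norm_num)]
  rw [hSval, h1, ZMod.natCast_eq_zero_iff] at hS0
  have h3 : 2 * m ∣ m * (2 * m) := ⟨m, by ring⟩
  have h4 : 2 * m ∣ m * (2 * m) - m * (2 * m - 1) := Nat.dvd_sub h3 hS0
  have h5 : m * (2 * m) - m * (2 * m - 1) = m := by
    rw [← Nat.mul_sub_left_distrib]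
    have : 2 * m - (2 * m - 1) = 1 := by omega
    rw [this, mul_one]
  rw [h5] at h4
  have := Nat.le_of_dvd (by omega) h4
  omega
end

section
/- If a finite group G (written multiplicatively) admits a complete mapping, then there exists an ordering (enumeration) of all elements of G whose product equals the identity. -/
/-!
Put `τ x = x * σ x`; then `τ` is a permutation of `G` and `σ x = x⁻¹ * τ x`. List `G` cycle by
cycle of `τ`, each cycle as `x, τ x, …, τ^[k-1] x`: the corresponding factors `σ y` telescope to
`x⁻¹ * τ^[k] x = 1` along every cycle, so the list of the `σ y` enumerates `G` with product `1`.
-/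

open Function Equiv

namespace Function

variable {α : Type*}

/-- The list underlying `Function.periodicOrbit f x`; it is empty when `x` is not periodic. -/
noncomputable def periodicOrbitList (f : α → α) (x : α) : List α :=
  (List.range (minimalPeriod f x)).map (f^[·] x)

theorem nodup_periodicOrbitList (f : α → α) (x : α) : (periodicOrbitList f x).Nodup :=
  Cycle.nodup_coe_iff.1 nodup_periodicOrbit

theorem prod_map_inv_mul_apply_periodicOrbitList_eq_one {G : Type*} [Group G] (f : α → α)
    (g : α → G) (x : α) : ((periodicOrbitList f x).map fun y => (g y)⁻¹ * g (f y)).prod = 1 := by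
  have := List.prod_range_div' (minimalPeriod f x) fun k => (g (f^[k] x))⁻¹
  simp only [iterate_zero_apply, iterate_minimalPeriod, div_self', div_inv_eq_mul,
    iterate_succ_apply'] at this
  rwa [periodicOrbitList, List.map_map]

end Function

namespace Equiv.Perm

variable {α : Type*} [Finite α]

theorem mem_periodicOrbitList_iff {τ : Perm α} {x y : α} :
    y ∈ periodicOrbitList τ x ↔ τ.SameCycle x y := by
  rw [← Cycle.mem_coe_iff, periodicOrbitList, ← periodicOrbit_def,
    mem_periodicOrbit_iff (τ.injective.mem_periodicPts x)]
  simp only [← Perm.coe_pow]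
  exact ⟨fun ⟨n, hn⟩ => ⟨n, hn⟩, SameCycle.exists_nat_pow_eq⟩

theorem exists_univ_list_prod_inv_mul_apply_eq_one {G : Type*} [Group G] (τ : Perm α)
    (g : α → G) :
    ∃ l : List α, l.Nodup ∧ (∀ x, x ∈ l) ∧ (l.map fun y => (g y)⁻¹ * g (τ y)).prod = 1 := by
  let cycles := Quotient (SameCycle.setoid τ)
  obtain ⟨reps, reps_nodup, mem_reps⟩ := Finite.exists_univ_list cycles
  have mem_cycle {q : cycles} {y : α} : y ∈ periodicOrbitList τ q.out ↔ ⟦y⟧ = q := by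
    conv_rhs => rw [← q.out_eq, Quotient.eq]
    exact mem_periodicOrbitList_iff.trans ⟨SameCycle.symm, SameCycle.symm⟩
  refine ⟨reps.flatMap fun q => periodicOrbitList τ q.out, ?_, ?_, ?_⟩
  · refine List.nodup_flatMap.2 ⟨fun q _ => nodup_periodicOrbitList _ _, ?_⟩
    refine reps_nodup.pairwise_of_forall_ne fun q _ q' _ hne => List.disjoint_left.2 ?_
    exact fun y hy hy' => hne ((mem_cycle.1 hy).symm.trans (mem_cycle.1 hy'))
  · exact fun x => List.mem_flatMap.2 ⟨⟦x⟧, mem_reps _, mem_cycle.2 rfl⟩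
  · rw [List.map_flatMap, List.flatMap_def, List.prod_flatten, List.map_map]
    refine List.prod_eq_one fun _ hq => ?_
    obtain ⟨q, -, rfl⟩ := List.mem_map.1 hq
    exact prod_map_inv_mul_apply_periodicOrbitList_eq_one τ g q.out

end Equiv.Perm

theorem complete_mapping_exists_ordering_prod_one {G : Type*} [Group G] [Fintype G]
    (σ : G ≃ G) (h : Function.Bijective (fun x => x * σ x)) :
    ∃ l : List G, l.Nodup ∧ (∀ g : G, g ∈ l) ∧ l.prod = 1 := by
  obtain ⟨l, l_nodup, mem_l, l_prod⟩ :=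
    Perm.exists_univ_list_prod_inv_mul_apply_eq_one (Equiv.ofBijective _ h) id
  have σ_eq : (fun y => y⁻¹ * (y * σ y)) = σ := funext fun y => inv_mul_cancel_left y (σ y)
  refine ⟨l.map σ, l_nodup.map σ.injective, fun g => ?_, ?_⟩
  · exact List.mem_map.2 ⟨σ.symm g, mem_l _, σ.apply_symm_apply g⟩
  · simpa only [ofBijective_apply, id, σ_eq] using l_prod
end
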